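/- Let λ > 0, let x₁,…,x_n ∈ R^m be arbitrary vectors, and set V_t = λ I_m + Σ_{u=1}^t x_u x_u⊤ (so V_0 = λ I_m). Then Σ_{t=1}^n min{ 1, x_t⊤ V_{t-1}^{-1} x_t } ≤ 2 · log( det(V_n) / det(λ I_m) ). -/

import Mathlib

/-!
Adding the rank-one term `x xᵀ` to a positive definite `V` multiplies its determinant by
`1 + xᵀ V⁻¹ x` (matrix determinant lemma), so `∑ log (1 + x_tᵀ V_{t-1}⁻¹ x_t)` telescopes to
`log (det V_n / det V_0)`. Termwise, `min 1 u ≤ 4u / (u + 2) ≤ 2 log (1 + u)` for `u ≥ 0`.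
-/

open Finset Matrix Real

theorem Real.min_one_le_two_mul_log_one_add {u : ℝ} (hu : 0 ≤ u) :
    min 1 u ≤ 2 * log (1 + u) := by
  have hmin : min 1 u ≤ 2 * (2 * u / (u + 2)) := by
    rw [mul_div_assoc', le_div_iff₀ (by positivity)]
    rcases le_total u 1 with h | h
    · rw [min_eq_right h]; nlinarith
    · rw [min_eq_left h]; linarith
  linarith [le_log_one_add_of_nonneg hu]

namespace Matrix

variable {m : Type*} [Fintype m]

theorem PosDef.add_vecMulVec_self {A : Matrix m m ℝ} (hA : A.PosDef) (v : m → ℝ) :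
    (A + vecMulVec v v).PosDef :=
  hA.add_posSemidef (posSemidef_vecMulVec_self_star v)

variable [DecidableEq m]

theorem det_add_vecMulVec {α : Type*} [CommRing α] {A : Matrix m m α} (hA : IsUnit A.det)
    (u v : m → α) : (A + vecMulVec u v).det = A.det * (1 + v ⬝ᵥ A⁻¹ *ᵥ u) := by
  rw [vecMulVec_eq Unit, det_add_replicateCol_mul_replicateRow hA, det_unique (1 + _),
    Matrix.mul_assoc, ← replicateCol_mulVec]
  rfl

namespace PosDef

variable {A : Matrix m m ℝ}

theorem dotProduct_inv_mulVec_nonneg (hA : A.PosDef) (v : m → ℝ) : 0 ≤ v ⬝ᵥ A⁻¹ *ᵥ v :=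
  hA.inv.posSemidef.dotProduct_mulVec_nonneg v

theorem log_det_add_vecMulVec_self (hA : A.PosDef) (v : m → ℝ) :
    log (A + vecMulVec v v).det = log A.det + log (1 + v ⬝ᵥ A⁻¹ *ᵥ v) := by
  have hq : 0 < 1 + v ⬝ᵥ A⁻¹ *ᵥ v := by linarith [hA.dotProduct_inv_mulVec_nonneg v]
  rw [det_add_vecMulVec hA.det_pos.ne'.isUnit, log_mul hA.det_pos.ne' hq.ne']

theorem min_one_dotProduct_inv_mulVec_le (hA : A.PosDef) (v : m → ℝ) :
    min 1 (v ⬝ᵥ A⁻¹ *ᵥ v) ≤ 2 * (log (A + vecMulVec v v).det - log A.det) := by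
  rw [hA.log_det_add_vecMulVec_self, add_sub_cancel_left]
  exact min_one_le_two_mul_log_one_add (hA.dotProduct_inv_mulVec_nonneg v)

end PosDef

theorem sum_min_one_dotProduct_inv_mulVec_le_two_mul_log_det_div {n : ℕ}
    (V : ℕ → Matrix m m ℝ) (x : Fin n → m → ℝ) (hV₀ : (V 0).PosDef)
    (hV : ∀ t : Fin n, V (t + 1) = V t + vecMulVec (x t) (x t)) :
    ∑ t, min 1 (x t ⬝ᵥ (V t)⁻¹ *ᵥ x t) ≤ 2 * log ((V n).det / (V 0).det) := by
  have hPD : ∀ t ≤ n, (V t).PosDef := by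
    intro t ht
    induction t with
    | zero => exact hV₀
    | succ t ih =>
      exact (hV ⟨t, ht⟩ : V (t + 1) = _) ▸ (ih (by omega)).add_vecMulVec_self _
  calc ∑ t, min 1 (x t ⬝ᵥ (V t)⁻¹ *ᵥ x t)
      ≤ ∑ t : Fin n, 2 * (log (V (t + 1)).det - log (V t).det) :=
        sum_le_sum fun t _ => hV t ▸ (hPD t t.is_le').min_one_dotProduct_inv_mulVec_le (x t)
    _ = 2 * (log (V n).det - log (V 0).det) := by
        rw [← mul_sum, Fin.sum_univ_eq_sum_range (fun t => log (V (t + 1)).det - log (V t).det),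
          sum_range_sub (fun t => log (V t).det)]
    _ = 2 * log ((V n).det / (V 0).det) := by
        rw [log_div (hPD n le_rfl).det_pos.ne' hV₀.det_pos.ne']

end Matrix

/-- **Elliptical potential lemma.**
Let `λ > 0`, let `x₁, …, x_n ∈ ℝ^m` be arbitrary vectors and set
`V_t = λ I_m + ∑_{u=1}^t x_u x_u⊤` (so `V_0 = λ I_m`).  Then
`∑_{t=1}^n min{1, x_t⊤ V_{t-1}⁻¹ x_t} ≤ 2 log(det V_n / det (λ I_m))`. -/
theorem elliptical_potential (m n : ℕ) (lam : ℝ) (hlam : 0 < lam)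
    (x : Fin n → Fin m → ℝ) (V : ℕ → Matrix (Fin m) (Fin m) ℝ)
    (hV : ∀ t : ℕ, V t = lam • (1 : Matrix (Fin m) (Fin m) ℝ) +
      ∑ u ∈ Finset.univ.filter (fun u : Fin n => (u : ℕ) < t),
        Matrix.vecMulVec (x u) (x u)) :
    ∑ t : Fin n, min 1 (dotProduct (x t) ((V (t : ℕ))⁻¹.mulVec (x t))) ≤
      2 * Real.log ((V n).det / (lam • (1 : Matrix (Fin m) (Fin m) ℝ)).det) := by
  have hV₀ : V 0 = lam • 1 := by simp [hV 0]
  rw [← hV₀]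
  refine sum_min_one_dotProduct_inv_mulVec_le_two_mul_log_det_div V x
    (hV₀ ▸ PosDef.one.smul hlam) fun t => ?_
  have hfilter : univ.filter (fun u : Fin n => (u : ℕ) < t + 1) =
      insert t (univ.filter (fun u : Fin n => (u : ℕ) < t)) := by
    ext u
    simp only [mem_filter, mem_univ, true_and, mem_insert, Fin.ext_iff]
    omega
  rw [hV, hV, hfilter, sum_insert (by simp), add_comm (vecMulVec _ _), add_assoc]
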